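/- Let (Y_t)_{t≥1} be identically distributed random variables with E|Y_1/n^ε|^q ≤ C_q < ∞ for all q ≥ 1, and suppose sup_{k≥1} |k^{−1/2−ζ'/2} Σ_{t=1}^k Y_t/n^ε| = O_P(1). Then for any m with n^ε/m^{ζ'/2} → 0, sup_{k ≥ m^{1+ζ}} |(m+k)^{−1/2−ζ'} Σ_{t=m+1}^{m+k} Y_t| = o_P(1). -/

import Mathlib

open MeasureTheory Filter Finset

/-! The window sum `∑_{t=m+1}^{m+k} Y_t` is a difference of two partial sums from the origin, so
on the event where `|∑_{t<n} Y_t| ≤ C_b a_m n^{1/2+ζ'/2}` for every `n ≥ 1` (probability at least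
`1 - δ`, uniformly in `m`) it is at most `2^{3/2+ζ'/2} C_b a_m (m+k)^{1/2+ζ'/2}`, and
`a_m ≤ ε m^{ζ'/2} ≤ ε (m+k)^{ζ'/2}` for large `m` supplies the missing power. -/

theorem abs_sum_Ico_le_of_abs_sum_range_le {y : ℕ → ℝ} {B p : ℝ} (hp : 0 ≤ p)
    (h : ∀ n, 1 ≤ n → |∑ t ∈ range n, y t| ≤ B * (n : ℝ) ^ p) {j : ℕ} (hj : 1 ≤ j) (k : ℕ) :
    |∑ t ∈ Ico j (j + k), y t| ≤ 2 * B * ((j + k : ℕ) : ℝ) ^ p := by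
  have hB : 0 ≤ B := by simpa using (abs_nonneg _).trans (h 1 le_rfl)
  have hmono : B * (j : ℝ) ^ p ≤ B * ((j + k : ℕ) : ℝ) ^ p := by
    gcongr
    omega
  rw [sum_Ico_eq_sub _ (Nat.le_add_right j k)]
  calc |∑ t ∈ range (j + k), y t - ∑ t ∈ range j, y t|
      ≤ |∑ t ∈ range (j + k), y t| + |∑ t ∈ range j, y t| := abs_sub _ _
    _ ≤ B * ((j + k : ℕ) : ℝ) ^ p + B * (j : ℝ) ^ p := add_le_add (h _ (by omega)) (h j hj)
    _ ≤ 2 * B * ((j + k : ℕ) : ℝ) ^ p := by linarith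

theorem rpow_add_one_le_two_rpow_mul {x p : ℝ} (hx : 1 ≤ x) (hp : 0 ≤ p) :
    (x + 1) ^ p ≤ 2 ^ p * x ^ p := by
  rw [← Real.mul_rpow zero_le_two (by linarith)]
  gcongr
  linarith

theorem abs_sum_Ico_succ_le {y : ℕ → ℝ} {B p q ε : ℝ} (hp : 0 ≤ p) (hq : 0 ≤ q) (hε : 0 ≤ ε)
    (h : ∀ n, 1 ≤ n → |∑ t ∈ range n, y t| ≤ B * (n : ℝ) ^ p) {m : ℕ} (hm : 1 ≤ m)
    (hB : 2 ^ (p + 1) * B ≤ ε * (m : ℝ) ^ q) (k : ℕ) :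
    |∑ t ∈ Ico (m + 1) (m + 1 + k), y t| ≤ ε * ((m : ℝ) + k) ^ (p + q) := by
  have hB0 : 0 ≤ B := by simpa using (abs_nonneg _).trans (h 1 le_rfl)
  have hmk : (1 : ℝ) ≤ m + k := by
    have : (1 : ℝ) ≤ m := by exact_mod_cast hm
    linarith [(k.cast_nonneg : (0 : ℝ) ≤ k)]
  calc |∑ t ∈ Ico (m + 1) (m + 1 + k), y t|
      ≤ 2 * B * (((m : ℝ) + k) + 1) ^ p := by
        convert abs_sum_Ico_le_of_abs_sum_range_le hp h (Nat.le_add_left 1 m) k using 3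
        push_cast; ring
    _ ≤ 2 * B * (2 ^ p * ((m : ℝ) + k) ^ p) := by
        gcongr; exact rpow_add_one_le_two_rpow_mul hmk hp
    _ = 2 ^ (p + 1) * B * ((m : ℝ) + k) ^ p := by
        rw [Real.rpow_add_one two_ne_zero]; ring
    _ ≤ ε * (m : ℝ) ^ q * ((m : ℝ) + k) ^ p := by gcongr
    _ ≤ ε * ((m : ℝ) + k) ^ q * ((m : ℝ) + k) ^ p := by
        gcongr
        simp
    _ = ε * ((m : ℝ) + k) ^ (p + q) := by
        rw [Real.rpow_add (by linarith)]; ring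

theorem Filter.Tendsto.eventually_le_const_mul_of_div {ι : Type*} {l : Filter ι} {a b : ι → ℝ}
    (h : Tendsto (fun i => a i / b i) l (nhds 0)) (hb : ∀ᶠ i in l, 0 < b i) {c : ℝ}
    (hc : 0 < c) : ∀ᶠ i in l, a i ≤ c * b i := by
  filter_upwards [h.eventually (gt_mem_nhds hc), hb] with i hi hbi
  rw [div_lt_iff₀ hbi] at hi
  exact hi.le

theorem stmt15_general {Ω : Type*} [MeasurableSpace Ω] (P : Measure Ω)
    (Y : ℕ → ℕ → Ω → ℝ) (a : ℕ → ℝ)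
    (ζ ζ' : ℝ) (hζ : 0 < ζ) (hζ' : ζ' = ζ / (2 * (1 + ζ)))
    (hOP : ∀ δ > (0 : ℝ), ∃ Cb > (0 : ℝ), ∀ m : ℕ,
      P {ω | ∃ k : ℕ, 1 ≤ k ∧
        Cb * (k : ℝ) ^ ((1 : ℝ) / 2 + ζ' / 2) * a m <
          |∑ t ∈ Finset.range k, Y m t ω|} ≤ ENNReal.ofReal δ)
    (hdecay : Tendsto (fun m : ℕ => a m / (m : ℝ) ^ (ζ' / 2)) atTop (nhds 0)) :
    ∀ δ > (0 : ℝ), ∀ ε' > (0 : ℝ), ∀ᶠ m : ℕ in atTop,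
      P {ω | ∃ k : ℕ, (m : ℝ) ^ (1 + ζ) ≤ k ∧
        ε' * ((m : ℝ) + k) ^ ((1 : ℝ) / 2 + ζ') <
          |∑ t ∈ Finset.Ico (m + 1) (m + 1 + k), Y m t ω|} ≤
        ENNReal.ofReal δ := by
  intro δ hδ ε' hε'
  obtain ⟨Cb, hCb, hbound⟩ := hOP δ hδ
  set p : ℝ := 1 / 2 + ζ' / 2
  have hζ'pos : 0 < ζ' := by rw [hζ']; positivity
  have hpos : ∀ᶠ m : ℕ in atTop, 0 < (m : ℝ) ^ (ζ' / 2) := by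
    filter_upwards [eventually_gt_atTop 0] with m hm
    exact Real.rpow_pos_of_pos (Nat.cast_pos.2 hm) _
  have hsmall := hdecay.eventually_le_const_mul_of_div hpos
    (c := ε' / (2 ^ (p + 1) * Cb)) (by positivity)
  filter_upwards [hsmall, eventually_ge_atTop 1] with m hm hm1
  refine (measure_mono fun ω hω => ?_).trans (hbound m)
  obtain ⟨k, -, hlt⟩ := hω
  by_contra hgood
  simp only [Set.mem_ofPred_eq, not_exists, not_and, not_lt] at hgood
  refine hlt.not_ge ?_
  have hexp : (1 : ℝ) / 2 + ζ' = p + ζ' / 2 := by ring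
  rw [hexp]
  refine abs_sum_Ico_succ_le (B := Cb * a m) (by positivity) (by positivity) hε'.le
    (fun n hn => by simpa [mul_right_comm] using hgood n hn) hm1 ?_ k
  calc 2 ^ (p + 1) * (Cb * a m)
      ≤ 2 ^ (p + 1) * Cb * (ε' / (2 ^ (p + 1) * Cb) * (m : ℝ) ^ (ζ' / 2)) := by
        rw [← mul_assoc]; gcongr
    _ = ε' * (m : ℝ) ^ (ζ' / 2) := by field_simp

/-- If the normalized partial sum suprema are `O_P(1)` and `n^ε/m^{ζ'/2} → 0`,
then `sup_{k ≥ m^{1+ζ}} |(m+k)^{−1/2−ζ'} Σ_{t=m+1}^{m+k} Y_t| = o_P(1)`. -/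
theorem stmt15 {Ω : Type*} [MeasurableSpace Ω] (P : Measure Ω)
    [IsProbabilityMeasure P]
    (Y : ℕ → ℕ → Ω → ℝ) (a : ℕ → ℝ) (ha : ∀ m, 0 < a m)
    (ζ ζ' : ℝ) (hζ : 0 < ζ) (hζ' : ζ' = ζ / (2 * (1 + ζ)))
    (hmeas : ∀ m t, Measurable (Y m t))
    (hstat : ∀ m j k : ℕ,
      P.map (fun ω => ∑ t ∈ Finset.Ico j (j + k), Y m t ω) =
        P.map (fun ω => ∑ t ∈ Finset.range k, Y m t ω))
    (hOP : ∀ δ > (0 : ℝ), ∃ Cb > (0 : ℝ), ∀ m : ℕ,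
      P {ω | ∃ k : ℕ, 1 ≤ k ∧
        Cb * (k : ℝ) ^ ((1 : ℝ) / 2 + ζ' / 2) * a m <
          |∑ t ∈ Finset.range k, Y m t ω|} ≤ ENNReal.ofReal δ)
    (hdecay : Tendsto (fun m : ℕ => a m / (m : ℝ) ^ (ζ' / 2)) atTop (nhds 0)) :
    ∀ δ > (0 : ℝ), ∀ ε' > (0 : ℝ), ∀ᶠ m : ℕ in atTop,
      P {ω | ∃ k : ℕ, (m : ℝ) ^ (1 + ζ) ≤ k ∧
        ε' * ((m : ℝ) + k) ^ ((1 : ℝ) / 2 + ζ') <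
          |∑ t ∈ Finset.Ico (m + 1) (m + 1 + k), Y m t ω|} ≤
        ENNReal.ofReal δ :=
  stmt15_general P Y a ζ ζ' hζ hζ' hOP hdecay
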